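/- arXiv:2602.14621 — 4 statements merged into one kernel-verified Lean document; each statement's English description precedes it below -/
import Mathlib

section
/- Let H be a real Hilbert space, v : H → H Lipschitz with constant L and β-strongly monotone with β > 0, and suppose v(x*) = 0 for some x* ∈ H. Let 0 < γ < min(1/(2L), β/L²) and define the extragradient iteration x_{n+1} = x_n - γ v(x_n - γ v(x_n)). Then for all n, ‖x_{n+1} - x*‖² ≤ (1 - 2γβ + 4γ²βL)‖x_n - x*‖² + γ²(γL²/β - 1)‖v(x_n - γ v(x_n))‖². -/
/-!
Expand `‖x⁺ - x*‖²` around `x - x*` and split `⟪x - x*, v y⟫` (with `y = x - γ v x` the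
extrapolated point) as `⟪y - x*, v y⟫ + γ ⟪v x, v y⟫`. Strong monotonicity bounds the first term
by `β ‖y - x*‖² ≥ β (‖x - x*‖ - γ ‖v x‖)²`, and the Lipschitz bound on `v x - v y` bounds the
second by `‖v y‖² - γ L ‖v x‖ ‖v y‖`. What remains is a real inequality, settled by
`‖v x‖ ≤ L ‖x - x*‖` and AM-GM on the cross term `2 L ‖v x‖ ‖v y‖`.
-/

open scoped RealInnerProductSpace

/-- In the application `a = ‖x - x*‖`, `b = ‖v y‖`, `c = ‖v x‖` and `d = ‖y - x*‖`. -/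
lemma extragradient_real_bound {a b c d γ L β : ℝ} (hβ : 0 < β) (hγ : 0 ≤ γ) (ha : 0 ≤ a)
    (hc : c ≤ L * a) (hd : |a - γ * c| ≤ d) :
    a ^ 2 - 2 * γ * (β * d ^ 2 + γ * (b ^ 2 - γ * L * c * b)) + γ ^ 2 * b ^ 2 ≤
      (1 - 2 * γ * β + 4 * γ ^ 2 * β * L) * a ^ 2 + γ ^ 2 * (γ * L ^ 2 / β - 1) * b ^ 2 := by
  have hd2 : (a - γ * c) ^ 2 ≤ d ^ 2 := by
    rw [← sq_abs]; exact pow_le_pow_left₀ (abs_nonneg _) hd 2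
  have hgap : (1 - 2 * γ * β + 4 * γ ^ 2 * β * L) * a ^ 2 + γ ^ 2 * (γ * L ^ 2 / β - 1) * b ^ 2
      - (a ^ 2 - 2 * γ * (β * d ^ 2 + γ * (b ^ 2 - γ * L * c * b)) + γ ^ 2 * b ^ 2) =
      2 * γ * β * (d ^ 2 - (a - γ * c) ^ 2) + 4 * γ ^ 2 * β * a * (L * a - c)
        + γ ^ 3 * β * c ^ 2 + γ ^ 3 * (L * b - β * c) ^ 2 / β := by
    field_simp
    ring
  have h₁ : 0 ≤ 2 * γ * β * (d ^ 2 - (a - γ * c) ^ 2) := by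
    have := sub_nonneg.2 hd2; positivity
  have h₂ : 0 ≤ 4 * γ ^ 2 * β * a * (L * a - c) := by
    have := sub_nonneg.2 hc; positivity
  have h₃ : 0 ≤ γ ^ 3 * β * c ^ 2 + γ ^ 3 * (L * b - β * c) ^ 2 / β := by positivity
  linarith

lemma norm_sq_sub_mul_le_real_inner {H : Type*} [NormedAddCommGroup H] [InnerProductSpace ℝ H]
    (u w : H) : ‖w‖ ^ 2 - ‖u - w‖ * ‖w‖ ≤ ⟪u, w⟫ := by
  have hsplit : ⟪u, w⟫ = ⟪u - w, w⟫ + ‖w‖ ^ 2 := by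
    rw [← real_inner_self_eq_norm_sq, ← inner_add_left, sub_add_cancel]
  have := neg_le_of_abs_le (abs_real_inner_le_norm (u - w) w)
  linarith

section Extragradient

variable {H : Type*} [NormedAddCommGroup H] [InnerProductSpace ℝ H]

def extragradientStep (v : H → H) (γ : ℝ) (x : H) : H :=
  x - γ • v (x - γ • v x)

theorem norm_extragradientStep_sub_sq_le {v : H → H} {L β γ : ℝ} (hβ : 0 < β) (hγ : 0 ≤ γ)
    (hLip : ∀ x y : H, ‖v x - v y‖ ≤ L * ‖x - y‖)
    (hmon : ∀ x y : H, β * ‖x - y‖ ^ 2 ≤ ⟪v x - v y, x - y⟫)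
    {xs : H} (hzero : v xs = 0) (x : H) :
    ‖extragradientStep v γ x - xs‖ ^ 2 ≤
      (1 - 2 * γ * β + 4 * γ ^ 2 * β * L) * ‖x - xs‖ ^ 2 +
        γ ^ 2 * (γ * L ^ 2 / β - 1) * ‖v (x - γ • v x)‖ ^ 2 := by
  set y := x - γ • v x with hy
  set w := v y
  have hxy : ‖x - y‖ = γ * ‖v x‖ := by
    rw [hy, sub_sub_cancel, norm_smul, Real.norm_of_nonneg hγ]
  have hexpand : ‖extragradientStep v γ x - xs‖ ^ 2 =
      ‖x - xs‖ ^ 2 - 2 * γ * ⟪x - xs, w⟫ + γ ^ 2 * ‖w‖ ^ 2 := by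
    rw [extragradientStep, sub_right_comm, norm_sub_sq_real, real_inner_smul_right, norm_smul,
      Real.norm_of_nonneg hγ]
    ring
  have hsplit : ⟪x - xs, w⟫ = ⟪y - xs, w⟫ + γ * ⟪v x, w⟫ := by
    rw [← real_inner_smul_left, ← inner_add_left, hy]
    congr 1
    abel
  have hstrong : β * ‖y - xs‖ ^ 2 ≤ ⟪y - xs, w⟫ := by
    simpa only [hzero, sub_zero, real_inner_comm] using hmon y xs
  have hcross : ‖w‖ ^ 2 - γ * L * ‖v x‖ * ‖w‖ ≤ ⟪v x, w⟫ := by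
    have hvw : ‖v x - w‖ ≤ L * (γ * ‖v x‖) := hxy ▸ hLip x y
    have := norm_sq_sub_mul_le_real_inner (v x) w
    nlinarith [mul_le_mul_of_nonneg_right hvw (norm_nonneg w)]
  have hvx : ‖v x‖ ≤ L * ‖x - xs‖ := by
    simpa only [hzero, sub_zero] using hLip x xs
  have hdist : |‖x - xs‖ - γ * ‖v x‖| ≤ ‖y - xs‖ := by
    rw [← hxy, ← sub_sub_sub_cancel_left xs y x]
    exact abs_norm_sub_norm_le _ _
  calc ‖extragradientStep v γ x - xs‖ ^ 2
      ≤ ‖x - xs‖ ^ 2 - 2 * γ * (β * ‖y - xs‖ ^ 2 + γ * (‖w‖ ^ 2 - γ * L * ‖v x‖ * ‖w‖))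
          + γ ^ 2 * ‖w‖ ^ 2 := by
        rw [hexpand, hsplit]
        gcongr
    _ ≤ _ := extragradient_real_bound hβ hγ (norm_nonneg _) hvx hdist

end Extragradient

theorem stmt4_general {H : Type*} [NormedAddCommGroup H] [InnerProductSpace ℝ H]
    (v : H → H) (L β : ℝ) (hβ : 0 < β)
    (hLip : ∀ x y : H, ‖v x - v y‖ ≤ L * ‖x - y‖)
    (hmon : ∀ x y : H, β * ‖x - y‖ ^ 2 ≤ ⟪v x - v y, x - y⟫)
    (xs : H) (hzero : v xs = 0)
    (γ : ℝ) (hγ0 : 0 < γ)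
    (x : ℕ → H)
    (hrec : ∀ n : ℕ, x (n + 1) = x n - γ • v (x n - γ • v (x n))) :
    ∀ n : ℕ,
      ‖x (n + 1) - xs‖ ^ 2 ≤
        (1 - 2 * γ * β + 4 * γ ^ 2 * β * L) * ‖x n - xs‖ ^ 2 +
          γ ^ 2 * (γ * L ^ 2 / β - 1) * ‖v (x n - γ • v (x n))‖ ^ 2 := by
  intro n
  rw [hrec n]
  exact norm_extragradientStep_sub_sq_le hβ hγ0.le hLip hmon hzero (x n)

theorem stmt4 {H : Type*} [NormedAddCommGroup H] [InnerProductSpace ℝ H] [CompleteSpace H]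
    (v : H → H) (L β : ℝ) (hL : 0 < L) (hβ : 0 < β)
    (hLip : ∀ x y : H, ‖v x - v y‖ ≤ L * ‖x - y‖)
    (hmon : ∀ x y : H, β * ‖x - y‖ ^ 2 ≤ ⟪v x - v y, x - y⟫)
    (xs : H) (hzero : v xs = 0)
    (γ : ℝ) (hγ0 : 0 < γ) (hγ : γ < min (1 / (2 * L)) (β / L ^ 2))
    (x : ℕ → H)
    (hrec : ∀ n : ℕ, x (n + 1) = x n - γ • v (x n - γ • v (x n))) :
    ∀ n : ℕ,
      ‖x (n + 1) - xs‖ ^ 2 ≤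
        (1 - 2 * γ * β + 4 * γ ^ 2 * β * L) * ‖x n - xs‖ ^ 2 +
          γ ^ 2 * (γ * L ^ 2 / β - 1) * ‖v (x n - γ • v (x n))‖ ^ 2 :=
  stmt4_general v L β hβ hLip hmon xs hzero γ hγ0 x hrec
end

section
/- Let H be a real Hilbert space. Given a non-increasing sequence of positive step sizes (γ_n), vectors (V_n), (V_{n+1/2}) in H, and sequences defined by X_{n+1/2} = X_n - γ_n V_n, Y_{n+1} = Y_n - V_{n+1/2}, X_{n+1} = γ_{n+1} Y_{n+1}, with X_1 = γ_1 Y_1. Then for every x ∈ H and every n ≥ 1: Σ_{i=1}^n ⟨V_{i+1/2}, X_{i+1/2} - x⟩ ≤ ‖x - X_1‖²/(2γ_1) + (1/(2γ_{n+1}) - 1/(2γ_1))‖x‖² + (1/2) Σ_{i=1}^n ( γ_i ‖V_{i+1/2} - V_i‖² - (1/γ_i) ‖X_{i+1/2} - X_i‖² ). -/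
open scoped RealInnerProductSpace

private lemma step_id {H : Type*} [NormedAddCommGroup H] [InnerProductSpace ℝ H]
    (g : ℝ) (hg : 0 < g) (a b c : H) :
    ⟪b, (g • a - g • c)⟫ + g / 2 * ‖a - b‖ ^ 2 - g / 2 * ‖a‖ ^ 2 =
      1 / 2 * (g * ‖b - c‖ ^ 2 - (1 / g) * ‖(g • a - g • c) - g • a‖ ^ 2) := by
  have h1 : ∀ v : H, ‖v‖ ^ 2 = ⟪v, v⟫ := fun v => (real_inner_self_eq_norm_sq v).symm
  simp only [h1, inner_sub_left, inner_sub_right, real_inner_smul_left, real_inner_smul_right,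
    real_inner_comm a b, real_inner_comm a c, real_inner_comm c b]
  field_simp
  ring

private lemma young {H : Type*} [NormedAddCommGroup H] [InnerProductSpace ℝ H]
    (g : ℝ) (hg : 0 < g) (y x : H) :
    ⟪y, x⟫ ≤ g / 2 * ‖y‖ ^ 2 + ‖x‖ ^ 2 / (2 * g) := by
  have h0 : (0:ℝ) ≤ ‖g • y - x‖ ^ 2 := sq_nonneg _
  rw [norm_sub_sq_real, norm_smul, real_inner_smul_left] at h0
  simp only [Real.norm_eq_abs, abs_of_pos hg] at h0
  rw [mul_pow] at h0
  have hg2 : (0:ℝ) < 2 * g := by positivity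
  rw [← sub_nonneg]
  have heq : g / 2 * ‖y‖ ^ 2 + ‖x‖ ^ 2 / (2 * g) - ⟪y, x⟫ =
      (g ^ 2 * ‖y‖ ^ 2 - 2 * (g * ⟪y, x⟫) + ‖x‖ ^ 2) / (2 * g) := by
    field_simp; ring
  rw [heq]
  exact div_nonneg h0 hg2.le

theorem stmt6 {H : Type*} [NormedAddCommGroup H] [InnerProductSpace ℝ H] [CompleteSpace H]
    (γ : ℕ → ℝ) (hγpos : ∀ n, 0 < γ n) (hγmono : ∀ n, γ (n + 1) ≤ γ n)
    (V Vh : ℕ → H) (X Xh Y : ℕ → H)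
    (hXh : ∀ n, Xh n = X n - γ n • V n)
    (hY : ∀ n, Y (n + 1) = Y n - Vh n)
    (hX : ∀ n, X (n + 1) = γ (n + 1) • Y (n + 1))
    (hX1 : X 1 = γ 1 • Y 1) :
    ∀ x : H, ∀ n : ℕ, 1 ≤ n →
      ∑ i ∈ Finset.Icc 1 n, ⟪Vh i, Xh i - x⟫ ≤
        ‖x - X 1‖ ^ 2 / (2 * γ 1) +
          (1 / (2 * γ (n + 1)) - 1 / (2 * γ 1)) * ‖x‖ ^ 2 +
          (1 / 2) * ∑ i ∈ Finset.Icc 1 n,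
            (γ i * ‖Vh i - V i‖ ^ 2 - (1 / γ i) * ‖Xh i - X i‖ ^ 2) := by
  -- X m = γ m • Y m for all m ≥ 1
  have hXY : ∀ m : ℕ, 1 ≤ m → X m = γ m • Y m := by
    intro m hm
    rcases Nat.exists_eq_add_of_le hm with ⟨k, rfl⟩
    cases k with
    | zero => simpa using hX1
    | succ k => exact hX (1 + k) ▸ rfl
  -- telescoping of Y
  have hYtel : ∀ n : ℕ, Y (n + 1) = Y 1 - ∑ i ∈ Finset.Icc 1 n, Vh i := by
    intro n
    induction n with
    | zero => simp
    | succ n ih =>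
      rw [Finset.sum_Icc_succ_top (by omega : 1 ≤ n + 1), hY (n + 1), ih, sub_sub]
  -- main induction
  have main : ∀ n : ℕ,
      (∑ i ∈ Finset.Icc 1 n, ⟪Vh i, Xh i⟫) + γ (n + 1) / 2 * ‖Y (n + 1)‖ ^ 2 ≤
        γ 1 / 2 * ‖Y 1‖ ^ 2 + 1 / 2 * ∑ i ∈ Finset.Icc 1 n,
          (γ i * ‖Vh i - V i‖ ^ 2 - (1 / γ i) * ‖Xh i - X i‖ ^ 2) := by
    intro n
    induction n with
    | zero => simp
    | succ n ih =>
      rw [Finset.sum_Icc_succ_top (by omega : 1 ≤ n + 1),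
        Finset.sum_Icc_succ_top (by omega : 1 ≤ n + 1)]
      have hid := step_id (γ (n + 1)) (hγpos (n + 1)) (Y (n + 1)) (Vh (n + 1)) (V (n + 1))
      have hXh' : Xh (n + 1) = γ (n + 1) • Y (n + 1) - γ (n + 1) • V (n + 1) := by
        rw [hXh (n + 1), hXY (n + 1) (by omega)]
      have hX' : X (n + 1) = γ (n + 1) • Y (n + 1) := hXY (n + 1) (by omega)
      rw [← hXh', ← hX', ← hY (n + 1)] at hid
      have hmono := hγmono (n + 1)
      have hsq : (0:ℝ) ≤ ‖Y (n + 1 + 1)‖ ^ 2 := sq_nonneg _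
      nlinarith [mul_nonneg (sub_nonneg.mpr hmono) hsq]
  intro x n hn
  -- split the inner products
  have hsplit : ∑ i ∈ Finset.Icc 1 n, ⟪Vh i, Xh i - x⟫ =
      (∑ i ∈ Finset.Icc 1 n, ⟪Vh i, Xh i⟫) - ⟪Y 1, x⟫ + ⟪Y (n + 1), x⟫ := by
    have : ∑ i ∈ Finset.Icc 1 n, ⟪Vh i, x⟫ = ⟪Y 1 - Y (n + 1), x⟫ := by
      rw [← sum_inner]
      congr 1
      have := hYtel n
      rw [this]; abel
    simp only [inner_sub_right, Finset.sum_sub_distrib, this, inner_sub_left]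
    ring
  rw [hsplit]
  have h1 := main n
  have h2 := young (γ (n + 1)) (hγpos (n + 1)) (Y (n + 1)) x
  have h3 : ‖x - X 1‖ ^ 2 / (2 * γ 1) =
      ‖x‖ ^ 2 / (2 * γ 1) - ⟪Y 1, x⟫ + γ 1 / 2 * ‖Y 1‖ ^ 2 := by
    rw [hX1, norm_sub_sq_real, norm_smul, real_inner_smul_right, mul_pow]
    simp only [Real.norm_eq_abs, abs_of_pos (hγpos 1)]
    rw [real_inner_comm x (Y 1)]
    have hne : γ 1 ≠ 0 := (hγpos 1).ne'
    field_simp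
  have h4 : (1 / (2 * γ (n + 1)) - 1 / (2 * γ 1)) * ‖x‖ ^ 2 =
      ‖x‖ ^ 2 / (2 * γ (n + 1)) - ‖x‖ ^ 2 / (2 * γ 1) := by ring
  rw [h3, h4]
  linarith
end

section
/- Let H be a real Hilbert space, v : H → H Lipschitz with constant L, c-strongly monotone (c > 0), with zero α*. Fix 0 < γ ≤ 1/L and α_1 ∈ H, and define α_{n+1/2} = α_n - γ v(α_n), α_{n+1} = α_n - γ v(α_{n+1/2}). Suppose the averaged-iterate bound Σ_{i=1}^n ⟨v(α_{i+1/2}), α_{i+1/2} - α⟩ ≤ ‖α - α_1‖²/(2γ) holds for all α ∈ H and all n. Then the averages ᾱ_n = (1/n) Σ_{i=1}^n α_{i+1/2} satisfy ‖α* - ᾱ_n‖² ≤ ‖α* - α_1‖²/(2γ c n) for all n ≥ 1. -/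
/-!
Strong monotonicity at the zero `αs` of `v` gives `c ‖x - αs‖² ≤ ⟪v x, x - αs⟫`, so taking
`x = αs` in the summed extragradient inequality bounds `c ∑ ‖ah i - αs‖²` by `‖αs - a 1‖² / (2γ)`.
Convexity of `‖·‖²` (Jensen) turns this into the bound for the average of the `ah i`.
-/

open scoped RealInnerProductSpace
open Finset

section Average

variable {ι E : Type*} [SeminormedAddCommGroup E] [NormedSpace ℝ E]

lemma sub_average_eq_average_sub {s : Finset ι} (hs : s.Nonempty) (x : E) (f : ι → E) :
    x - (#s : ℝ)⁻¹ • ∑ i ∈ s, f i = (#s : ℝ)⁻¹ • ∑ i ∈ s, (x - f i) := by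
  have hcard : (#s : ℝ) ≠ 0 := by exact_mod_cast hs.card_pos.ne'
  rw [sum_sub_distrib, sum_const, smul_sub, ← Nat.cast_smul_eq_nsmul ℝ, smul_smul,
    inv_mul_cancel₀ hcard, one_smul]

lemma norm_average_sq_le (s : Finset ι) (f : ι → E) :
    ‖(#s : ℝ)⁻¹ • ∑ i ∈ s, f i‖ ^ 2 ≤ (#s : ℝ)⁻¹ * ∑ i ∈ s, ‖f i‖ ^ 2 := by
  calc ‖(#s : ℝ)⁻¹ • ∑ i ∈ s, f i‖ ^ 2 = (‖∑ i ∈ s, f i‖ / #s) ^ 2 := by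
        rw [norm_smul, norm_inv, Real.norm_natCast, inv_mul_eq_div]
    _ ≤ ((∑ i ∈ s, ‖f i‖) / #s) ^ 2 := by gcongr; exact norm_sum_le s f
    _ ≤ (∑ i ∈ s, ‖f i‖ ^ 2) / #s := sum_div_card_sq_le_sum_sq_div_card
    _ = (#s : ℝ)⁻¹ * ∑ i ∈ s, ‖f i‖ ^ 2 := inv_mul_eq_div _ _ |>.symm

end Average

lemma mul_norm_sub_sq_le_inner_of_apply_eq_zero {H : Type*} [NormedAddCommGroup H]
    [InnerProductSpace ℝ H] {v : H → H} {c : ℝ}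
    (hmon : ∀ x y : H, c * ‖x - y‖ ^ 2 ≤ ⟪v x - v y, x - y⟫) {αs : H} (hzero : v αs = 0)
    (x : H) : c * ‖x - αs‖ ^ 2 ≤ ⟪v x, x - αs⟫ := by
  simpa [hzero] using hmon x αs

theorem stmt7_general {H : Type*} [NormedAddCommGroup H] [InnerProductSpace ℝ H]
    (v : H → H) (c : ℝ) (hc : 0 < c)
    (hmon : ∀ x y : H, c * ‖x - y‖ ^ 2 ≤ ⟪v x - v y, x - y⟫)
    (αs : H) (hzero : v αs = 0)
    (γ : ℝ)
    (a ah : ℕ → H)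
    (hsum : ∀ (x : H) (n : ℕ), 1 ≤ n →
      ∑ i ∈ Finset.Icc 1 n, ⟪v (ah i), ah i - x⟫ ≤ ‖x - a 1‖ ^ 2 / (2 * γ)) :
    ∀ n : ℕ, 1 ≤ n →
      ‖αs - (n : ℝ)⁻¹ • ∑ i ∈ Finset.Icc 1 n, ah i‖ ^ 2 ≤
        ‖αs - a 1‖ ^ 2 / (2 * γ * c * n) := by
  intro n hn
  have hcard : #(Icc 1 n) = n := Nat.card_Icc 1 n |>.trans (Nat.add_sub_cancel n 1)
  have hne : (Icc 1 n).Nonempty := nonempty_Icc.mpr hn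
  have hsq : ∑ i ∈ Icc 1 n, ‖αs - ah i‖ ^ 2 ≤ ‖αs - a 1‖ ^ 2 / (2 * γ) / c := by
    rw [le_div_iff₀ hc, sum_mul]
    refine le_trans (sum_le_sum fun i _ => ?_) (hsum αs n hn)
    rw [mul_comm, norm_sub_rev]
    exact mul_norm_sub_sq_le_inner_of_apply_eq_zero hmon hzero (ah i)
  calc ‖αs - (n : ℝ)⁻¹ • ∑ i ∈ Icc 1 n, ah i‖ ^ 2
      = ‖(n : ℝ)⁻¹ • ∑ i ∈ Icc 1 n, (αs - ah i)‖ ^ 2 := by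
        simpa only [hcard] using congr_arg (‖·‖ ^ 2) (sub_average_eq_average_sub hne αs ah)
    _ ≤ (n : ℝ)⁻¹ * ∑ i ∈ Icc 1 n, ‖αs - ah i‖ ^ 2 := by
        simpa only [hcard] using norm_average_sq_le (Icc 1 n) (αs - ah ·)
    _ ≤ (n : ℝ)⁻¹ * (‖αs - a 1‖ ^ 2 / (2 * γ) / c) := by gcongr
    _ = ‖αs - a 1‖ ^ 2 / (2 * γ * c * n) := by rw [div_div, inv_mul_eq_div, div_div]

theorem stmt7 {H : Type*} [NormedAddCommGroup H] [InnerProductSpace ℝ H] [CompleteSpace H]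
    (v : H → H) (L c : ℝ) (hL : 0 < L) (hc : 0 < c)
    (hLip : ∀ x y : H, ‖v x - v y‖ ≤ L * ‖x - y‖)
    (hmon : ∀ x y : H, c * ‖x - y‖ ^ 2 ≤ ⟪v x - v y, x - y⟫)
    (αs : H) (hzero : v αs = 0)
    (γ : ℝ) (hγ0 : 0 < γ) (hγ : γ ≤ 1 / L)
    (a ah : ℕ → H)
    (hah : ∀ n, ah n = a n - γ • v (a n))
    (ha : ∀ n, a (n + 1) = a n - γ • v (ah n))
    (hsum : ∀ (x : H) (n : ℕ), 1 ≤ n →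
      ∑ i ∈ Finset.Icc 1 n, ⟪v (ah i), ah i - x⟫ ≤ ‖x - a 1‖ ^ 2 / (2 * γ)) :
    ∀ n : ℕ, 1 ≤ n →
      ‖αs - (n : ℝ)⁻¹ • ∑ i ∈ Finset.Icc 1 n, ah i‖ ^ 2 ≤
        ‖αs - a 1‖ ^ 2 / (2 * γ * c * n) :=
  stmt7_general v c hc hmon αs hzero γ a ah hsum
end

section
/- Let H be a real Hilbert space and F : H × H → H such that for each fixed X, the map α ↦ F(X,α) is a bijection of H, and suppose (C_F²/(2c))‖X-Y‖² + ⟨F(X,α)-F(Y,α'), α-α'⟩ ≥ (c/2)‖α-α'‖² for all X,Y,α,α'. Then the inverse map F⁻¹ (in the second argument) is Lipschitz: ‖F⁻¹(X,u) - F⁻¹(Y,v)‖ ≤ (C_F/c)‖X-Y‖ + (2/c)‖u-v‖ for all X,Y,u,v ∈ H. -/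
open scoped RealInnerProductSpace

theorem stmt11 {H : Type*} [NormedAddCommGroup H] [InnerProductSpace ℝ H] [CompleteSpace H]
    (F : H → H → H) (C_F c : ℝ) (hC : 0 ≤ C_F) (hc : 0 < c)
    (hbij : ∀ X : H, Function.Bijective (F X))
    (hineq : ∀ X Y a a' : H,
      (c / 2) * ‖a - a'‖ ^ 2 ≤
        (C_F ^ 2 / (2 * c)) * ‖X - Y‖ ^ 2 + ⟪F X a - F Y a', a - a'⟫) :
    ∀ X Y u w : H,
      ‖Function.invFun (F X) u - Function.invFun (F Y) w‖ ≤
        (C_F / c) * ‖X - Y‖ + (2 / c) * ‖u - w‖ := by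
  intro X Y u w
  set a := Function.invFun (F X) u with ha_def
  set a' := Function.invFun (F Y) w with ha'_def
  have ha : F X a = u := Function.rightInverse_invFun (hbij X).2 u
  have ha' : F Y a' = w := Function.rightInverse_invFun (hbij Y).2 w
  have key := hineq X Y a a'
  rw [ha, ha'] at key
  have hip : ⟪u - w, a - a'⟫ ≤ ‖u - w‖ * ‖a - a'‖ := real_inner_le_norm _ _
  have hA : (0:ℝ) ≤ ‖X - Y‖ := norm_nonneg _
  have hB : (0:ℝ) ≤ ‖u - w‖ := norm_nonneg _
  have ht : (0:ℝ) ≤ ‖a - a'‖ := norm_nonneg _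
  by_contra h
  push_neg at h
  have h1 : C_F * ‖X - Y‖ + 2 * ‖u - w‖ < c * ‖a - a'‖ := by
    have h2 := mul_lt_mul_of_pos_left h hc
    have e1 : c * (C_F / c) = C_F := by field_simp
    have e2 : c * (2 / c) = 2 := by field_simp
    nlinarith [h2]
  have key2 : c ^ 2 * ‖a - a'‖ ^ 2 ≤
      C_F ^ 2 * ‖X - Y‖ ^ 2 + 2 * c * (‖u - w‖ * ‖a - a'‖) := by
    have h3 : c / 2 * ‖a - a'‖ ^ 2 ≤ C_F ^ 2 / (2 * c) * ‖X - Y‖ ^ 2 + ‖u - w‖ * ‖a - a'‖ :=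
      key.trans (by linarith)
    have h4 := mul_le_mul_of_nonneg_left h3 (le_of_lt (by positivity : (0:ℝ) < 2 * c))
    have e : 2 * c * (C_F ^ 2 / (2 * c)) = C_F ^ 2 := by field_simp
    nlinarith [h4]
  have h5 : (c * ‖a - a'‖ - ‖u - w‖) ^ 2 ≤ (C_F * ‖X - Y‖ + ‖u - w‖) ^ 2 := by
    nlinarith [key2, mul_nonneg (mul_nonneg hC hA) hB]
  have hy : (0:ℝ) ≤ C_F * ‖X - Y‖ + ‖u - w‖ := by positivity
  have hxy : (0:ℝ) < (c * ‖a - a'‖ - ‖u - w‖) - (C_F * ‖X - Y‖ + ‖u - w‖) := by linarith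
  nlinarith [h5, mul_pos hxy hxy, mul_nonneg hy hxy.le]
end
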